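/- arXiv:math/0612526 — 2 statements merged into one kernel-verified Lean document; each statement's English description precedes it below -/
import Mathlib

section
/- Let Φ : D² → ℝᵐ be a smooth conformal immersion with unit normal frame (n⃗₁,…,n⃗_{m−2}) and set n⃗ = n⃗₁ ∧ ⋯ ∧ n⃗_{m−2}. Then for each α, ∇n⃗_α + (−1)^{m−1} n⃗ ∧ ∇⊥n⃗_α = Σ_β (∇n⃗_α, n⃗_β) n⃗_β − 2 H^α ∇Φ, where H^α = H⃗ · n⃗_α are the components of the mean curvature vector. -/
open MeasureTheory Real
open scoped RealInnerProductSpace ENNReal NNReal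

noncomputable section

/-- The plane `ℝ²`. -/
abbrev Plane : Type := EuclideanSpace ℝ (Fin 2)

/-- Euclidean `ℝᵐ`. -/
abbrev Em (m : ℕ) : Type := EuclideanSpace ℝ (Fin m)

/-- The open unit disk `D² ⊆ ℝ²`. -/
def disk : Set Plane := Metric.ball 0 1

/-- Partial derivative in the `i`-th coordinate direction. -/
def pd {V : Type*} [NormedAddCommGroup V] [NormedSpace ℝ V]
    (i : Fin 2) (f : Plane → V) (x : Plane) : V :=
  fderiv ℝ f x (EuclideanSpace.single i (1:ℝ))

/-- Flat Laplacian `Δ = ∂₁² + ∂₂²`. -/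
def lap {V : Type*} [NormedAddCommGroup V] [NormedSpace ℝ V]
    (f : Plane → V) (x : Plane) : V :=
  pd 0 (pd 0 f) x + pd 1 (pd 1 f) x

/-- Divergence of the field with components `F 0, F 1`. -/
def divg {V : Type*} [NormedAddCommGroup V] [NormedSpace ℝ V]
    (F : Fin 2 → Plane → V) (x : Plane) : V :=
  pd 0 (F 0) x + pd 1 (F 1) x

/-- `i`-th component of the rotated gradient `∇⊥ = (−∂₂, ∂₁)`. -/
def perp {V : Type*} [NormedAddCommGroup V] [NormedSpace ℝ V]
    (i : Fin 2) (f : Plane → V) (x : Plane) : V :=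
  if i = 0 then -(pd 1 f x) else pd 0 f x

/-- Scalar test functions compactly supported in the open unit disk. -/
def IsTest (φ : Plane → ℝ) : Prop :=
  ContDiff ℝ (⊤ : ℕ∞) φ ∧ HasCompactSupport φ ∧ tsupport φ ⊆ disk

/-- Vector valued test functions compactly supported in the open unit disk. -/
def IsTestV {m : ℕ} (φ : Plane → Em m) : Prop :=
  ContDiff ℝ (⊤ : ℕ∞) φ ∧ HasCompactSupport φ ∧ tsupport φ ⊆ disk

/-- `G` is the distributional gradient of the extension of `u` by `0` outside the unit
disk; this encodes `u ∈ W^{1,2}₀(D²)` (zero boundary trace). -/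
def HasWeakDerivZ {m : ℕ} (u : Plane → Em m) (G : Fin 2 → Plane → Em m) : Prop :=
  ∀ φ : Plane → ℝ, ContDiff ℝ (⊤ : ℕ∞) φ → HasCompactSupport φ →
    ∀ i : Fin 2, ∫ x in disk, pd i φ x • u x = -∫ x in disk, φ x • G i x

/-- `P` is a measurable field of orthogonal projections of rank `m − 2`: the pointwise
orthogonal projection `π_n` onto the `(m−2)`-plane of a unit `(m−2)`-vector field `n`. -/
def IsNormalProj (m : ℕ) (P : Plane → Em m →L[ℝ] Em m) : Prop :=
  (∀ x u v, ⟪P x u, v⟫ = ⟪u, P x v⟫) ∧ (∀ x, (P x).comp (P x) = P x) ∧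
  (∀ x, Module.finrank ℝ (LinearMap.range ((P x) : Em m →ₗ[ℝ] Em m)) = m - 2)

/-- The weak-`L²` (Lorentz `L^{2,∞}`) quasinorm on the unit disk. -/
def wnorm2 (u : Plane → ℝ) : ℝ≥0∞ :=
  ⨆ t : ℝ≥0, (t : ℝ≥0∞) * (volume {x ∈ disk | (t:ℝ) < |u x|}) ^ (1/2 : ℝ)

/-- The Lorentz `L^{2,1}` norm on the unit disk. -/
def lnorm21 (u : Plane → ℝ) : ℝ≥0∞ :=
  ∫⁻ t in Set.Ioi (0:ℝ), (volume {x ∈ disk | t < |u x|}) ^ (1/2 : ℝ)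

lemma pd_contDiff {V : Type*} [NormedAddCommGroup V] [NormedSpace ℝ V] {f : Plane → V}
    (hf : ContDiff ℝ (⊤ : ℕ∞) f) (i : Fin 2) : ContDiff ℝ (⊤ : ℕ∞) (pd i f) := by
  have h : ContDiff ℝ (⊤ : ℕ∞) (fderiv ℝ f) := hf.fderiv_right (by simp)
  exact (ContinuousLinearMap.apply ℝ V (EuclideanSpace.single i (1:ℝ))).contDiff.comp h

lemma pd_comm {V : Type*} [NormedAddCommGroup V] [NormedSpace ℝ V] {f : Plane → V}
    (hf : ContDiff ℝ (⊤ : ℕ∞) f) (x : Plane) :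
    pd 0 (pd 1 f) x = pd 1 (pd 0 f) x := by
  have hdf : ContDiff ℝ (⊤ : ℕ∞) (fderiv ℝ f) := hf.fderiv_right (by simp)
  have key : ∀ i j : Fin 2, pd i (pd j f) x
      = fderiv ℝ (fderiv ℝ f) x (EuclideanSpace.single i (1:ℝ)) (EuclideanSpace.single j (1:ℝ)) := by
    intro i j
    show fderiv ℝ (fun y => fderiv ℝ f y (EuclideanSpace.single j (1:ℝ))) x _ = _
    rw [fderiv_clm_apply ((hdf.differentiable (by simp)) x) (differentiableAt_const _)]
    simp
  rw [key, key]
  exact second_derivative_symmetric (fun y => ((hf.differentiable (by simp)) y).hasFDerivAt)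
    ((hdf.differentiable (by simp)) x).hasFDerivAt _ _

/-- the identity
`∇n⃗_α + (−1)^{m−1} n⃗ ∧ ∇⊥n⃗_α = Σ_β (∇n⃗_α, n⃗_β) n⃗_β − 2 H^α ∇Φ`,
where `Wn x` is the linear map `v ↦ n⃗(x) ∧ v` and
`H^α = −(e^{−2λ}/2) ((∂₁n⃗_α, ∂₁Φ) + (∂₂n⃗_α, ∂₂Φ))`. -/
theorem frame_gradient_identity
    (m k : ℕ) (hm : m = k + 2)
    (Φ : Plane → Em m) (lam : Plane → ℝ) (nv : Fin k → Plane → Em m)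
    (Wn : Plane → Em m →L[ℝ] Em m)
    (hΦ : ContDiff ℝ (⊤ : ℕ∞) Φ) (hlam : ContDiff ℝ (⊤ : ℕ∞) lam) (hnv : ∀ α, ContDiff ℝ (⊤ : ℕ∞) (nv α))
    (hconf0 : ∀ x, ⟪pd 0 Φ x, pd 1 Φ x⟫ = 0)
    (hconf : ∀ x i, ‖pd i Φ x‖ = Real.exp (lam x))
    (horth : ∀ x α β, ⟪nv α x, nv β x⟫ = if α = β then (1:ℝ) else 0)
    (hnormal : ∀ x α i, ⟪nv α x, pd i Φ x⟫ = 0)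
    (hspan : ∀ x, Submodule.span ℝ
      (insert (pd 0 Φ x) (insert (pd 1 Φ x) (Set.range fun β => nv β x))) = ⊤)
    (hWn1 : ∀ x, Wn x (pd 0 Φ x) = ((-1:ℝ)^(m-1)) • pd 1 Φ x)
    (hWn2 : ∀ x, Wn x (pd 1 Φ x) = ((-1:ℝ)^(m-2)) • pd 0 Φ x)
    (hWn3 : ∀ x β, Wn x (nv β x) = 0) :
    ∀ (α : Fin k) (x : Plane) (i : Fin 2),
      pd i (nv α) x + ((-1:ℝ)^(m-1)) • Wn x (perp i (nv α) x)
        = (∑ β, ⟪pd i (nv α) x, nv β x⟫ • nv β x)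
          - (2 * (-(Real.exp (-(2 * lam x)) / 2) *
              (⟪pd 0 (nv α) x, pd 0 Φ x⟫ + ⟪pd 1 (nv α) x, pd 1 Φ x⟫))) • pd i Φ x := by
  intro α x i
  set t : ℝ := (-1:ℝ)^k with ht_def
  have ht : t * t = 1 := by rw [ht_def, ← mul_pow]; norm_num
  have hs1 : ((-1:ℝ)^(m-1)) = -t := by subst hm; simp [ht_def, pow_succ]
  have hs2 : ((-1:ℝ)^(m-2)) = t := by subst hm; simp [ht_def]
  set E : ℝ := Real.exp (-(2 * lam x)) with hE_def
  have hE : ∀ j : Fin 2, E * ⟪pd j Φ x, pd j Φ x⟫ = 1 := by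
    intro j
    rw [real_inner_self_eq_norm_sq, hconf x j, hE_def, sq, ← Real.exp_add, ← Real.exp_add]
    rw [show -(2 * lam x) + (lam x + lam x) = 0 by ring, Real.exp_zero]
  have hP10 : ⟪pd 1 Φ x, pd 0 Φ x⟫ = 0 := by rw [real_inner_comm]; exact hconf0 x
  have hPn : ∀ (j : Fin 2) β, ⟪pd j Φ x, nv β x⟫ = 0 := by
    intro j β; rw [real_inner_comm]; exact hnormal x β j
  -- any vector orthogonal to the frame is zero
  have hzero : ∀ w : Em m, ⟪w, pd 0 Φ x⟫ = 0 → ⟪w, pd 1 Φ x⟫ = 0 →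
      (∀ β, ⟪w, nv β x⟫ = 0) → w = 0 := by
    intro w h0 h1 hb
    have hw : w ∈ (Submodule.span ℝ (insert (pd 0 Φ x)
        (insert (pd 1 Φ x) (Set.range fun β => nv β x))))ᗮ := by
      rw [Submodule.mem_orthogonal']
      intro u hu
      induction hu using Submodule.span_induction with
      | mem u hu =>
        rcases hu with rfl | rfl | ⟨β, rfl⟩
        · exact h0
        · exact h1
        · exact hb β
      | zero => simp
      | add u v _ _ hu hv => rw [inner_add_right, hu, hv]; ring
      | smul c u _ hu => rw [real_inner_smul_right, hu]; ring
    rw [hspan x, Submodule.top_orthogonal_eq_bot] at hw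
    simpa using hw
  -- orthogonal decomposition
  have decomp : ∀ v : Em m, v = (∑ β, ⟪v, nv β x⟫ • nv β x)
      + ((E * ⟪v, pd 0 Φ x⟫) • pd 0 Φ x + (E * ⟪v, pd 1 Φ x⟫) • pd 1 Φ x) := by
    intro v
    rw [← sub_eq_zero]
    apply hzero
    · simp only [inner_sub_left, inner_add_left, sum_inner, real_inner_smul_left,
        hnormal, hP10, mul_zero, zero_add, add_zero, Finset.sum_const_zero, zero_sub, sub_zero]
      linear_combination (-(⟪v, pd 0 Φ x⟫)) * hE 0
    · simp only [inner_sub_left, inner_add_left, sum_inner, real_inner_smul_left,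
        hnormal, hconf0 x, mul_zero, zero_add, add_zero, Finset.sum_const_zero]
      linear_combination (-(⟪v, pd 1 Φ x⟫)) * hE 1
    · intro β
      simp only [inner_sub_left, inner_add_left, sum_inner, real_inner_smul_left,
        horth, hPn, mul_zero, mul_ite, mul_one, zero_add, add_zero,
        Finset.sum_ite_eq', Finset.mem_univ, if_pos, sub_self]
  -- symmetry of mixed inner products
  have hsym : ⟪pd 0 (nv α) x, pd 1 Φ x⟫ = ⟪pd 1 (nv α) x, pd 0 Φ x⟫ := by
    have hdn : Differentiable ℝ (nv α) := (hnv α).differentiable (by simp)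
    have hdP : ∀ j : Fin 2, Differentiable ℝ (pd j Φ) :=
      fun j => (pd_contDiff hΦ j).differentiable (by simp)
    have key : ∀ p q : Fin 2, ⟪pd p (nv α) x, pd q Φ x⟫ = -⟪nv α x, pd p (pd q Φ) x⟫ := by
      intro p q
      have hz : (fun y => ⟪nv α y, pd q Φ y⟫) = fun _ => (0:ℝ) :=
        funext fun y => hnormal y α q
      have h0 : fderiv ℝ (fun y => ⟪nv α y, pd q Φ y⟫) x (EuclideanSpace.single p (1:ℝ)) = 0 := by
        rw [hz]; simp
      rw [fderiv_inner_apply (𝕜 := ℝ) (hdn x) (hdP q x)] at h0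
      have h1 : ⟪nv α x, pd p (pd q Φ) x⟫ + ⟪pd p (nv α) x, pd q Φ x⟫ = 0 := h0
      linarith
    rw [key 0 1, key 1 0, pd_comm hΦ x]
  -- action of Wn on the gradient of nv α
  have hW : ∀ j : Fin 2, Wn x (pd j (nv α) x)
      = (-t * (E * ⟪pd j (nv α) x, pd 0 Φ x⟫)) • pd 1 Φ x
        + (t * (E * ⟪pd j (nv α) x, pd 1 Φ x⟫)) • pd 0 Φ x := by
    intro j
    conv_lhs => rw [decomp (pd j (nv α) x)]
    rw [map_add, map_add, map_sum, _root_.map_smul, _root_.map_smul, hWn1, hWn2, hs1, hs2]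
    simp only [_root_.map_smul, hWn3, smul_zero, Finset.sum_const_zero, smul_smul, zero_add]
    module
  fin_cases i
  · show pd 0 (nv α) x + ((-1:ℝ)^(m-1)) • Wn x (perp 0 (nv α) x)
        = (∑ β, ⟪pd 0 (nv α) x, nv β x⟫ • nv β x)
          - (2 * (-(E / 2) *
              (⟪pd 0 (nv α) x, pd 0 Φ x⟫ + ⟪pd 1 (nv α) x, pd 1 Φ x⟫))) • pd 0 Φ x
    have hperp : perp 0 (nv α) x = -(pd 1 (nv α) x) := by simp [perp]
    rw [hperp, map_neg, hW 1, hs1]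
    rw [← sub_eq_zero]
    apply hzero
    · simp only [inner_sub_left, inner_add_left, inner_neg_left, sum_inner,
        real_inner_smul_left, hnormal, hPn, hP10, hconf0 x,
        mul_zero, zero_add, add_zero, neg_zero, zero_sub, sub_zero, Finset.sum_const_zero]
      linear_combination (E * ⟪pd 1 (nv α) x, pd 1 Φ x⟫ * ⟪pd 0 Φ x, pd 0 Φ x⟫) * ht
        - ⟪pd 0 (nv α) x, pd 0 Φ x⟫ * hE 0
    · simp only [inner_sub_left, inner_add_left, inner_neg_left, sum_inner,
        real_inner_smul_left, hnormal, hPn, hP10, hconf0 x,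
        mul_zero, zero_add, add_zero, neg_zero, zero_sub, sub_zero, Finset.sum_const_zero]
      linear_combination (-(E * ⟪pd 1 (nv α) x, pd 0 Φ x⟫ * ⟪pd 1 Φ x, pd 1 Φ x⟫)) * ht
        - ⟪pd 1 (nv α) x, pd 0 Φ x⟫ * hE 1 + hsym
    · intro β
      simp only [inner_sub_left, inner_add_left, inner_neg_left, sum_inner,
        real_inner_smul_left, horth, hnormal, hPn, mul_zero, mul_ite, mul_one,
        zero_add, add_zero, neg_zero, sub_zero, Finset.sum_ite_eq', Finset.mem_univ, if_pos, sub_self]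
  · show pd 1 (nv α) x + ((-1:ℝ)^(m-1)) • Wn x (perp 1 (nv α) x)
        = (∑ β, ⟪pd 1 (nv α) x, nv β x⟫ • nv β x)
          - (2 * (-(E / 2) *
              (⟪pd 0 (nv α) x, pd 0 Φ x⟫ + ⟪pd 1 (nv α) x, pd 1 Φ x⟫))) • pd 1 Φ x
    have hperp : perp 1 (nv α) x = pd 0 (nv α) x := by simp [perp]
    rw [hperp, hW 0, hs1]
    rw [← sub_eq_zero]
    apply hzero
    · simp only [inner_sub_left, inner_add_left, sum_inner,
        real_inner_smul_left, hnormal, hPn, hP10, hconf0 x,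
        mul_zero, zero_add, add_zero, zero_sub, sub_zero, Finset.sum_const_zero]
      linear_combination (-(E * ⟪pd 0 (nv α) x, pd 1 Φ x⟫ * ⟪pd 0 Φ x, pd 0 Φ x⟫)) * ht
        - ⟪pd 0 (nv α) x, pd 1 Φ x⟫ * hE 0 - hsym
    · simp only [inner_sub_left, inner_add_left, sum_inner,
        real_inner_smul_left, hnormal, hPn, hP10, hconf0 x,
        mul_zero, zero_add, add_zero, zero_sub, sub_zero, Finset.sum_const_zero]
      linear_combination (E * ⟪pd 0 (nv α) x, pd 0 Φ x⟫ * ⟪pd 1 Φ x, pd 1 Φ x⟫) * ht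
        - ⟪pd 1 (nv α) x, pd 1 Φ x⟫ * hE 1
    · intro β
      simp only [inner_sub_left, inner_add_left, sum_inner,
        real_inner_smul_left, horth, hnormal, hPn, mul_zero, mul_ite, mul_one,
        zero_add, add_zero, sub_zero, Finset.sum_ite_eq', Finset.mem_univ, if_pos, sub_self]
end
end

section
/- Let Φ : D² → ℝᵐ be a smooth conformal immersion. Then Φ is Willmore (i.e., satisfies Δ_⊥H⃗ − 2|H⃗|²H⃗ + Ã(H⃗) = 0) if and only if ΔH⃗ − 3 div(π_{n⃗}(∇H⃗)) + div(∇⊥H⃗ ∧ n⃗) = 0 in D², where all differential operators are taken with respect to the flat metric on D². -/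
open MeasureTheory Real
open scoped RealInnerProductSpace ENNReal NNReal

noncomputable section

/-- Pointwise orthogonal projection onto the normal space of the conformal immersion `Φ`
(with conformal factor `e^λ`): `π_{n⃗}(v) = v − e^{−2λ}((v,∂₁Φ)∂₁Φ + (v,∂₂Φ)∂₂Φ)`. -/
def piN (m : ℕ) (Φ : Plane → Em m) (lam : Plane → ℝ) (x : Plane) (v : Em m) : Em m :=
  v - (Real.exp (-(2 * lam x)) * ⟪v, pd 0 Φ x⟫) • pd 0 Φ x
    - (Real.exp (-(2 * lam x)) * ⟪v, pd 1 Φ x⟫) • pd 1 Φ x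

/-- The mean curvature vector `H⃗ = (e^{−2λ}/2) π_{n⃗}(ΔΦ)`. -/
def meanCurv (m : ℕ) (Φ : Plane → Em m) (lam : Plane → ℝ) (x : Plane) : Em m :=
  (Real.exp (-(2 * lam x)) / 2) • piN m Φ lam x (lap Φ x)

/-- Second fundamental form on the orthonormal tangent frame:
`B(e_i,e_j) = e^{−2λ} π_{n⃗}(∂_i∂_jΦ)`. -/
def sff (m : ℕ) (Φ : Plane → Em m) (lam : Plane → ℝ) (i j : Fin 2) (x : Plane) : Em m :=
  Real.exp (-(2 * lam x)) • piN m Φ lam x (pd i (pd j Φ) x)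

/-- Covariant (normal bundle) Laplacian of `H⃗` : `e^{2λ} Δ_⊥H⃗ = π_{n⃗} div(π_{n⃗}(∇H⃗))`. -/
def covLap (m : ℕ) (Φ : Plane → Em m) (lam : Plane → ℝ) (x : Plane) : Em m :=
  Real.exp (-(2 * lam x)) •
    piN m Φ lam x (divg (fun i y => piN m Φ lam y (pd i (meanCurv m Φ lam) y)) x)

/-! ### Infrastructure : calculus of `pd` -/

section Infra

variable {V : Type*} [NormedAddCommGroup V] [NormedSpace ℝ V]

theorem contDiff_pd {f : Plane → V} (hf : ContDiff ℝ (⊤ : ℕ∞) f) (i : Fin 2) :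
    ContDiff ℝ (⊤ : ℕ∞) (pd i f) := by
  have h1 : ContDiff ℝ (⊤ : ℕ∞) (fderiv ℝ f) := hf.fderiv_right (by simp)
  exact (ContinuousLinearMap.apply ℝ V (EuclideanSpace.single i (1:ℝ))).contDiff.comp h1

theorem pd_add {f g : Plane → V} {x : Plane} (hf : DifferentiableAt ℝ f x)
    (hg : DifferentiableAt ℝ g x) (i : Fin 2) :
    pd i (fun y => f y + g y) x = pd i f x + pd i g x := by
  simp [pd, fderiv_fun_add hf hg]

theorem pd_sub {f g : Plane → V} {x : Plane} (hf : DifferentiableAt ℝ f x)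
    (hg : DifferentiableAt ℝ g x) (i : Fin 2) :
    pd i (fun y => f y - g y) x = pd i f x - pd i g x := by
  simp [pd, fderiv_fun_sub hf hg]

theorem pd_neg {f : Plane → V} {x : Plane} (i : Fin 2) :
    pd i (fun y => -(f y)) x = -(pd i f x) := by
  simp [pd, fderiv_neg]

theorem pd_smul {c : Plane → ℝ} {f : Plane → V} {x : Plane} (hc : DifferentiableAt ℝ c x)
    (hf : DifferentiableAt ℝ f x) (i : Fin 2) :
    pd i (fun y => c y • f y) x = pd i c x • f x + c x • pd i f x := by
  simp [pd, fderiv_fun_smul hc hf]; module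

theorem pd_mul {c d : Plane → ℝ} {x : Plane} (hc : DifferentiableAt ℝ c x)
    (hd : DifferentiableAt ℝ d x) (i : Fin 2) :
    pd i (fun y => c y * d y) x = pd i c x * d x + c x * pd i d x := by
  simp [pd, fderiv_fun_mul hc hd]; ring

theorem pd_inner {m : ℕ} {f g : Plane → Em m} {x : Plane} (hf : DifferentiableAt ℝ f x)
    (hg : DifferentiableAt ℝ g x) (i : Fin 2) :
    pd i (fun y => ⟪f y, g y⟫) x = ⟪pd i f x, g x⟫ + ⟪f x, pd i g x⟫ := by
  simp only [pd, fderiv_inner_apply ℝ hf hg]; ring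

theorem pd_exp {c : Plane → ℝ} {x : Plane} (hc : DifferentiableAt ℝ c x) (i : Fin 2) :
    pd i (fun y => rexp (c y)) x = pd i c x * rexp (c x) := by
  simp only [pd]
  rw [(hc.hasFDerivAt.exp).fderiv]
  simp [mul_comm]

theorem pd_symm {f : Plane → V} (hf : ContDiff ℝ (⊤ : ℕ∞) f) (i j : Fin 2) (x : Plane) :
    pd i (pd j f) x = pd j (pd i f) x := by
  have hs : IsSymmSndFDerivAt ℝ f x := (hf.contDiffAt).isSymmSndFDerivAt (by simp only [minSmoothness_of_isRCLikeNormedField]; exact WithTop.coe_le_coe.mpr le_top)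
  have hd : ContDiff ℝ (⊤ : ℕ∞) (fderiv ℝ f) := hf.fderiv_right (by simp)
  have key : ∀ (a b : Fin 2),
      pd a (pd b f) x
        = fderiv ℝ (fderiv ℝ f) x (EuclideanSpace.single a 1) (EuclideanSpace.single b 1) := by
    intro a b
    have hdd : DifferentiableAt ℝ (fderiv ℝ f) x := (hd.differentiable (by simp)).differentiableAt
    have : pd b f = fun y => (fderiv ℝ f y) ((fun _ => EuclideanSpace.single b (1:ℝ)) y) := rfl
    rw [pd, this, fderiv_clm_apply hdd (differentiableAt_const _)]
    simp
  rw [key, key]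
  exact hs (EuclideanSpace.single i 1) (EuclideanSpace.single j 1)

theorem contDiff_inner' {m : ℕ} {f g : Plane → Em m} (hf : ContDiff ℝ (⊤ : ℕ∞) f)
    (hg : ContDiff ℝ (⊤ : ℕ∞) g) : ContDiff ℝ (⊤ : ℕ∞) (fun y => ⟪f y, g y⟫) :=
  hf.inner ℝ hg

end Infra
section Geom

variable {m : ℕ} {Φ : Plane → Em m} {lam : Plane → ℝ}

/-- Conformality: inner products of the frame. -/
theorem inEE (hconf0 : ∀ x, ⟪pd 0 Φ x, pd 1 Φ x⟫ = 0)
    (hconf : ∀ x i, ‖pd i Φ x‖ = Real.exp (lam x)) (x : Plane) (i j : Fin 2) :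
    ⟪pd i Φ x, pd j Φ x⟫ = if i = j then rexp (2 * lam x) else 0 := by
  have hsq : ∀ i : Fin 2, ⟪pd i Φ x, pd i Φ x⟫ = rexp (2 * lam x) := by
    intro i
    rw [real_inner_self_eq_norm_sq, hconf x i, sq, ← Real.exp_add]
    ring_nf
  have h10 : ⟪pd 1 Φ x, pd 0 Φ x⟫ = (0:ℝ) := by
    rw [real_inner_comm]; exact hconf0 x
  fin_cases i <;> fin_cases j <;>
    first
      | exact hsq _
      | simpa using hconf0 x
      | simpa using h10

theorem rr (x : Plane) : rexp (-(2 * lam x)) * rexp (2 * lam x) = 1 := by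
  rw [← Real.exp_add]; simp

theorem piN_apply (x : Plane) (v : Em m) :
    piN m Φ lam x v = v - (rexp (-(2 * lam x)) * ⟪v, pd 0 Φ x⟫) • pd 0 Φ x
      - (rexp (-(2 * lam x)) * ⟪v, pd 1 Φ x⟫) • pd 1 Φ x := rfl

theorem inner_piN_E (hconf0 : ∀ x, ⟪pd 0 Φ x, pd 1 Φ x⟫ = 0)
    (hconf : ∀ x i, ‖pd i Φ x‖ = Real.exp (lam x)) (x : Plane) (v : Em m) (j : Fin 2) :
    ⟪piN m Φ lam x v, pd j Φ x⟫ = 0 := by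
  have h := inEE hconf0 hconf x
  fin_cases j
  · rw [piN_apply]
    simp only [inner_sub_left, real_inner_smul_left, h, reduceIte, mul_zero, sub_zero,
      Fin.zero_eta, Fin.mk_one, one_ne_zero, if_false, if_true]
    linear_combination (-(⟪v, pd 0 Φ x⟫)) * rr (lam := lam) x
  · rw [piN_apply]
    simp only [inner_sub_left, real_inner_smul_left, h, reduceIte, mul_zero, sub_zero,
      Fin.zero_eta, Fin.mk_one, zero_ne_one, if_false, if_true]
    linear_combination (-(⟪v, pd 1 Φ x⟫)) * rr (lam := lam) x

theorem piN_idem (hconf0 : ∀ x, ⟪pd 0 Φ x, pd 1 Φ x⟫ = 0)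
    (hconf : ∀ x i, ‖pd i Φ x‖ = Real.exp (lam x)) (x : Plane) (v : Em m) :
    piN m Φ lam x (piN m Φ lam x v) = piN m Φ lam x v := by
  conv_lhs => rw [piN_apply x (piN m Φ lam x v)]
  rw [inner_piN_E hconf0 hconf, inner_piN_E hconf0 hconf]
  simp

/-- `v = π_n v + tangential part`. -/
theorem piN_decomp (x : Plane) (v : Em m) :
    v = piN m Φ lam x v + (rexp (-(2 * lam x)) * ⟪v, pd 0 Φ x⟫) • pd 0 Φ x
      + (rexp (-(2 * lam x)) * ⟪v, pd 1 Φ x⟫) • pd 1 Φ x := by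
  rw [piN_apply]; abel

end Geom
section Geom2

variable {m : ℕ} {Φ : Plane → Em m} {lam : Plane → ℝ}

theorem smRho (hlam : ContDiff ℝ (⊤ : ℕ∞) lam) : ContDiff ℝ (⊤ : ℕ∞) (fun y => rexp (-(2 * lam y))) :=
  (Real.contDiff_exp (n := (⊤ : ℕ∞))).comp ((contDiff_const.mul hlam).neg)

theorem smPiNcomp (hΦ : ContDiff ℝ (⊤ : ℕ∞) Φ) (hlam : ContDiff ℝ (⊤ : ℕ∞) lam) {f : Plane → Em m}
    (hf : ContDiff ℝ (⊤ : ℕ∞) f) : ContDiff ℝ (⊤ : ℕ∞) (fun y => piN m Φ lam y (f y)) := by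
  have hE0 := contDiff_pd hΦ 0
  have hE1 := contDiff_pd hΦ 1
  have hr := smRho (lam := lam) hlam
  exact ((hf.sub (((hr.mul (hf.inner ℝ hE0))).smul hE0)).sub
    (((hr.mul (hf.inner ℝ hE1))).smul hE1))

theorem smLapPhi (hΦ : ContDiff ℝ (⊤ : ℕ∞) Φ) : ContDiff ℝ (⊤ : ℕ∞) (lap Φ) := by
  have : lap Φ = fun x => pd 0 (pd 0 Φ) x + pd 1 (pd 1 Φ) x := rfl
  rw [this]
  exact (contDiff_pd (contDiff_pd hΦ 0) 0).add (contDiff_pd (contDiff_pd hΦ 1) 1)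

theorem smH (hΦ : ContDiff ℝ (⊤ : ℕ∞) Φ) (hlam : ContDiff ℝ (⊤ : ℕ∞) lam) :
    ContDiff ℝ (⊤ : ℕ∞) (meanCurv m Φ lam) := by
  have : meanCurv m Φ lam
      = fun x => (rexp (-(2 * lam x)) / 2) • (fun y => piN m Φ lam y (lap Φ y)) x := rfl
  rw [this]
  exact ((smRho hlam).div_const 2).smul (smPiNcomp hΦ hlam (smLapPhi hΦ))

/-- `H` is orthogonal to the frame. -/
theorem innerHE (hconf0 : ∀ x, ⟪pd 0 Φ x, pd 1 Φ x⟫ = 0)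
    (hconf : ∀ x i, ‖pd i Φ x‖ = Real.exp (lam x)) (x : Plane) (j : Fin 2) :
    ⟪meanCurv m Φ lam x, pd j Φ x⟫ = 0 := by
  have : meanCurv m Φ lam x
      = (rexp (-(2 * lam x)) / 2) • piN m Φ lam x (lap Φ x) := rfl
  rw [this, real_inner_smul_left, inner_piN_E hconf0 hconf, mul_zero]

theorem innerEH (hconf0 : ∀ x, ⟪pd 0 Φ x, pd 1 Φ x⟫ = 0)
    (hconf : ∀ x i, ‖pd i Φ x‖ = Real.exp (lam x)) (x : Plane) (j : Fin 2) :
    ⟪pd j Φ x, meanCurv m Φ lam x⟫ = 0 := by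
  rw [real_inner_comm]; exact innerHE hconf0 hconf x j

end Geom2
section Geom3

variable {m : ℕ} {Φ : Plane → Em m} {lam : Plane → ℝ}

theorem pdq (hlam : ContDiff ℝ (⊤ : ℕ∞) lam) (k : Fin 2) (x : Plane) :
    pd k (fun y => rexp (2 * lam y)) x = 2 * pd k lam x * rexp (2 * lam x) := by
  have hd : DifferentiableAt ℝ (fun y => 2 * lam y) x :=
    (differentiableAt_const 2).mul (hlam.differentiable (by simp) x)
  rw [pd_exp hd]
  have : pd k (fun y => 2 * lam y) x = 2 * pd k lam x := by
    rw [pd_mul (differentiableAt_const 2) (hlam.differentiable (by simp) x)]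
    simp [pd]
  rw [this]

theorem pd_innerEE (hΦ : ContDiff ℝ (⊤ : ℕ∞) Φ) (i j k : Fin 2) (x : Plane) :
    pd i (fun y => ⟪pd j Φ y, pd k Φ y⟫) x
      = ⟪pd i (pd j Φ) x, pd k Φ x⟫ + ⟪pd j Φ x, pd i (pd k Φ) x⟫ := by
  exact pd_inner ((contDiff_pd hΦ j).differentiable (by simp) x)
    ((contDiff_pd hΦ k).differentiable (by simp) x) i

theorem gdiag (hΦ : ContDiff ℝ (⊤ : ℕ∞) Φ) (hlam : ContDiff ℝ (⊤ : ℕ∞) lam)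
    (hconf0 : ∀ x, ⟪pd 0 Φ x, pd 1 Φ x⟫ = 0)
    (hconf : ∀ x i, ‖pd i Φ x‖ = Real.exp (lam x)) (i j : Fin 2) (x : Plane) :
    ⟪pd i (pd j Φ) x, pd j Φ x⟫ = pd i lam x * rexp (2 * lam x) := by
  have hfun : (fun y => ⟪pd j Φ y, pd j Φ y⟫) = fun y => rexp (2 * lam y) := by
    funext y; simpa using inEE hconf0 hconf y j j
  have h1 := pd_innerEE hΦ i j j x
  rw [hfun, pdq hlam] at h1
  have hc : ⟪pd i (pd j Φ) x, pd j Φ x⟫ = ⟪pd j Φ x, pd i (pd j Φ) x⟫ := real_inner_comm _ _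
  linarith

theorem goff (hΦ : ContDiff ℝ (⊤ : ℕ∞) Φ) (hconf0 : ∀ x, ⟪pd 0 Φ x, pd 1 Φ x⟫ = 0)
    (i : Fin 2) (x : Plane) :
    ⟪pd i (pd 0 Φ) x, pd 1 Φ x⟫ + ⟪pd 0 Φ x, pd i (pd 1 Φ) x⟫ = 0 := by
  have h1 := pd_innerEE hΦ i 0 1 x
  have hfun : (fun y => ⟪pd 0 Φ y, pd 1 Φ y⟫) = fun _ => (0:ℝ) := funext fun y => hconf0 y
  rw [hfun] at h1
  simpa [pd] using h1.symm

theorem g000 (hΦ : ContDiff ℝ (⊤ : ℕ∞) Φ) (hlam : ContDiff ℝ (⊤ : ℕ∞) lam)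
    (hconf0 : ∀ x, ⟪pd 0 Φ x, pd 1 Φ x⟫ = 0)
    (hconf : ∀ x i, ‖pd i Φ x‖ = Real.exp (lam x)) (x : Plane) :
    ⟪pd 0 (pd 0 Φ) x, pd 0 Φ x⟫ = pd 0 lam x * rexp (2 * lam x) :=
  gdiag hΦ hlam hconf0 hconf 0 0 x

theorem g010 (hΦ : ContDiff ℝ (⊤ : ℕ∞) Φ) (hlam : ContDiff ℝ (⊤ : ℕ∞) lam)
    (hconf0 : ∀ x, ⟪pd 0 Φ x, pd 1 Φ x⟫ = 0)
    (hconf : ∀ x i, ‖pd i Φ x‖ = Real.exp (lam x)) (x : Plane) :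
    ⟪pd 0 (pd 1 Φ) x, pd 0 Φ x⟫ = pd 1 lam x * rexp (2 * lam x) := by
  rw [← pd_symm hΦ 1 0 x]; exact gdiag hΦ hlam hconf0 hconf 1 0 x

theorem g011 (hΦ : ContDiff ℝ (⊤ : ℕ∞) Φ) (hlam : ContDiff ℝ (⊤ : ℕ∞) lam)
    (hconf0 : ∀ x, ⟪pd 0 Φ x, pd 1 Φ x⟫ = 0)
    (hconf : ∀ x i, ‖pd i Φ x‖ = Real.exp (lam x)) (x : Plane) :
    ⟪pd 0 (pd 1 Φ) x, pd 1 Φ x⟫ = pd 0 lam x * rexp (2 * lam x) :=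
  gdiag hΦ hlam hconf0 hconf 0 1 x

theorem g111 (hΦ : ContDiff ℝ (⊤ : ℕ∞) Φ) (hlam : ContDiff ℝ (⊤ : ℕ∞) lam)
    (hconf0 : ∀ x, ⟪pd 0 Φ x, pd 1 Φ x⟫ = 0)
    (hconf : ∀ x i, ‖pd i Φ x‖ = Real.exp (lam x)) (x : Plane) :
    ⟪pd 1 (pd 1 Φ) x, pd 1 Φ x⟫ = pd 1 lam x * rexp (2 * lam x) :=
  gdiag hΦ hlam hconf0 hconf 1 1 x

theorem g001 (hΦ : ContDiff ℝ (⊤ : ℕ∞) Φ) (hlam : ContDiff ℝ (⊤ : ℕ∞) lam)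
    (hconf0 : ∀ x, ⟪pd 0 Φ x, pd 1 Φ x⟫ = 0)
    (hconf : ∀ x i, ‖pd i Φ x‖ = Real.exp (lam x)) (x : Plane) :
    ⟪pd 0 (pd 0 Φ) x, pd 1 Φ x⟫ = -(pd 1 lam x) * rexp (2 * lam x) := by
  have h := goff hΦ hconf0 0 x
  have h2 : ⟪pd 0 Φ x, pd 0 (pd 1 Φ) x⟫ = pd 1 lam x * rexp (2 * lam x) := by
    rw [real_inner_comm]; exact g010 hΦ hlam hconf0 hconf x
  linarith

theorem g110 (hΦ : ContDiff ℝ (⊤ : ℕ∞) Φ) (hlam : ContDiff ℝ (⊤ : ℕ∞) lam)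
    (hconf0 : ∀ x, ⟪pd 0 Φ x, pd 1 Φ x⟫ = 0)
    (hconf : ∀ x i, ‖pd i Φ x‖ = Real.exp (lam x)) (x : Plane) :
    ⟪pd 1 (pd 1 Φ) x, pd 0 Φ x⟫ = -(pd 0 lam x) * rexp (2 * lam x) := by
  have h := goff hΦ hconf0 1 x
  have h2 : ⟪pd 1 (pd 0 Φ) x, pd 1 Φ x⟫ = pd 0 lam x * rexp (2 * lam x) := by
    have hg := g011 hΦ hlam hconf0 hconf x
    rw [← pd_symm hΦ 1 0 x] at hg; exact hg
  have h3 : ⟪pd 0 Φ x, pd 1 (pd 1 Φ) x⟫ = ⟪pd 1 (pd 1 Φ) x, pd 0 Φ x⟫ := real_inner_comm _ _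
  linarith

/-- `ΔΦ = 2 e^{2λ} H`. -/
theorem lapPhi_eq (hΦ : ContDiff ℝ (⊤ : ℕ∞) Φ) (hlam : ContDiff ℝ (⊤ : ℕ∞) lam)
    (hconf0 : ∀ x, ⟪pd 0 Φ x, pd 1 Φ x⟫ = 0)
    (hconf : ∀ x i, ‖pd i Φ x‖ = Real.exp (lam x)) (x : Plane) :
    lap Φ x = (2 * rexp (2 * lam x)) • meanCurv m Φ lam x := by
  have hlp : lap Φ x = pd 0 (pd 0 Φ) x + pd 1 (pd 1 Φ) x := rfl
  have h0 : ⟪lap Φ x, pd 0 Φ x⟫ = 0 := by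
    rw [hlp, inner_add_left, g000 hΦ hlam hconf0 hconf, g110 hΦ hlam hconf0 hconf]; ring
  have h1 : ⟪lap Φ x, pd 1 Φ x⟫ = 0 := by
    rw [hlp, inner_add_left, g001 hΦ hlam hconf0 hconf, g111 hΦ hlam hconf0 hconf]; ring
  have hpi : piN m Φ lam x (lap Φ x) = lap Φ x := by
    rw [piN_apply, h0, h1]; simp
  have hH : meanCurv m Φ lam x = (rexp (-(2 * lam x)) / 2) • piN m Φ lam x (lap Φ x) := rfl
  rw [hH, hpi, smul_smul]
  rw [show 2 * rexp (2 * lam x) * (rexp (-(2 * lam x)) / 2)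
      = rexp (-(2 * lam x)) * rexp (2 * lam x) by ring, rr (lam := lam) x, one_smul]

end Geom3
section Geom4

variable {m : ℕ} {Φ : Plane → Em m} {lam : Plane → ℝ}

/-- Differentiating `⟪H, ∂ⱼΦ⟫ = 0`. -/
theorem pdH_E (hΦ : ContDiff ℝ (⊤ : ℕ∞) Φ) (hlam : ContDiff ℝ (⊤ : ℕ∞) lam)
    (hconf0 : ∀ x, ⟪pd 0 Φ x, pd 1 Φ x⟫ = 0)
    (hconf : ∀ x i, ‖pd i Φ x‖ = Real.exp (lam x)) (k j : Fin 2) (x : Plane) :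
    ⟪pd k (meanCurv m Φ lam) x, pd j Φ x⟫ = -⟪meanCurv m Φ lam x, pd k (pd j Φ) x⟫ := by
  have hz : (fun y => ⟪meanCurv m Φ lam y, pd j Φ y⟫) = fun _ => (0:ℝ) :=
    funext fun y => innerHE hconf0 hconf y j
  have h := pd_inner ((smH hΦ hlam).differentiable (by simp) x)
      ((contDiff_pd hΦ j).differentiable (by simp) x) k
  rw [hz] at h
  have h0 : (0:ℝ) = ⟪pd k (meanCurv m Φ lam) x, pd j Φ x⟫
      + ⟪meanCurv m Φ lam x, pd k (pd j Φ) x⟫ := by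
    simpa [pd, fderiv_const] using h
  linarith

/-- Decomposition of `∂ₖH` into normal and tangential parts (pointwise). -/
theorem pdH_point (hΦ : ContDiff ℝ (⊤ : ℕ∞) Φ) (hlam : ContDiff ℝ (⊤ : ℕ∞) lam)
    (hconf0 : ∀ x, ⟪pd 0 Φ x, pd 1 Φ x⟫ = 0)
    (hconf : ∀ x i, ‖pd i Φ x‖ = Real.exp (lam x)) (k : Fin 2) (y : Plane) :
    pd k (meanCurv m Φ lam) y = piN m Φ lam y (pd k (meanCurv m Φ lam) y)
      - (rexp (-(2 * lam y)) * ⟪meanCurv m Φ lam y, pd k (pd 0 Φ) y⟫) • pd 0 Φ y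
      - (rexp (-(2 * lam y)) * ⟪meanCurv m Φ lam y, pd k (pd 1 Φ) y⟫) • pd 1 Φ y := by
  rw [piN_apply, pdH_E hΦ hlam hconf0 hconf k 0, pdH_E hΦ hlam hconf0 hconf k 1]
  module

/-- Formula for the wedge map `Wn` on arbitrary vectors. -/
theorem Wn_formula {Wn : Plane → Em m →L[ℝ] Em m}
    (hconf0 : ∀ x, ⟪pd 0 Φ x, pd 1 Φ x⟫ = 0)
    (hconf : ∀ x i, ‖pd i Φ x‖ = Real.exp (lam x))
    (hWn1 : ∀ x, Wn x (pd 0 Φ x) = -(pd 1 Φ x))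
    (hWn2 : ∀ x, Wn x (pd 1 Φ x) = pd 0 Φ x)
    (hWn3 : ∀ x v, piN m Φ lam x v = v → Wn x v = 0) (x : Plane) (v : Em m) :
    Wn x v = (rexp (-(2 * lam x)) * ⟪v, pd 1 Φ x⟫) • pd 0 Φ x
      - (rexp (-(2 * lam x)) * ⟪v, pd 0 Φ x⟫) • pd 1 Φ x := by
  conv_lhs => rw [piN_decomp (Φ := Φ) (lam := lam) x v]
  rw [map_add, map_add, _root_.map_smul, _root_.map_smul, hWn1, hWn2,
    hWn3 x _ (piN_idem hconf0 hconf x v)]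
  module

end Geom4
section Geom5

variable {m : ℕ} {Φ : Plane → Em m} {lam : Plane → ℝ}

theorem pd_inner_zero {f g : Plane → Em m} (hf : ContDiff ℝ (⊤ : ℕ∞) f) (hg : ContDiff ℝ (⊤ : ℕ∞) g)
    (hz : ∀ y, ⟪f y, g y⟫ = 0) (k : Fin 2) (x : Plane) :
    ⟪pd k f x, g x⟫ = -⟪f x, pd k g x⟫ := by
  have h := pd_inner (hf.differentiable (by simp) x) (hg.differentiable (by simp) x) k
  have hzf : (fun y => ⟪f y, g y⟫) = fun _ => (0:ℝ) := funext hz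
  rw [hzf] at h
  have h0 : (0:ℝ) = ⟪pd k f x, g x⟫ + ⟪f x, pd k g x⟫ := by
    simpa [pd, fderiv_const] using h
  linarith

theorem innerPiNH (hconf0 : ∀ x, ⟪pd 0 Φ x, pd 1 Φ x⟫ = 0)
    (hconf : ∀ x i, ‖pd i Φ x‖ = Real.exp (lam x)) (x : Plane) (v : Em m) :
    ⟪piN m Φ lam x v, meanCurv m Φ lam x⟫ = ⟪v, meanCurv m Φ lam x⟫ := by
  rw [piN_apply]
  simp only [inner_sub_left, real_inner_smul_left,
    innerEH hconf0 hconf x 0, innerEH hconf0 hconf x 1]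
  ring

theorem smPdH (hΦ : ContDiff ℝ (⊤ : ℕ∞) Φ) (hlam : ContDiff ℝ (⊤ : ℕ∞) lam) (k : Fin 2) :
    ContDiff ℝ (⊤ : ℕ∞) (pd k (meanCurv m Φ lam)) := contDiff_pd (smH hΦ hlam) k

theorem smG (hΦ : ContDiff ℝ (⊤ : ℕ∞) Φ) (hlam : ContDiff ℝ (⊤ : ℕ∞) lam) (k : Fin 2) :
    ContDiff ℝ (⊤ : ℕ∞) (fun y => piN m Φ lam y (pd k (meanCurv m Φ lam) y)) :=
  smPiNcomp hΦ hlam (smPdH hΦ hlam k)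

/-- scalar coefficient functions `s k i j = e^{-2λ}⟪H, ∂ₖᵢⱼΦ⟫` are smooth -/
theorem smS (hΦ : ContDiff ℝ (⊤ : ℕ∞) Φ) (hlam : ContDiff ℝ (⊤ : ℕ∞) lam) (a b : Fin 2) :
    ContDiff ℝ (⊤ : ℕ∞) (fun y => rexp (-(2 * lam y)) * ⟪meanCurv m Φ lam y, pd a (pd b Φ) y⟫) :=
  (smRho hlam).mul ((smH hΦ hlam).inner ℝ (contDiff_pd (contDiff_pd hΦ b) a))

theorem smQ (hlam : ContDiff ℝ (⊤ : ℕ∞) lam) : ContDiff ℝ (⊤ : ℕ∞) (fun y => rexp (2 * lam y)) :=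
  (Real.contDiff_exp (n := (⊤ : ℕ∞))).comp (contDiff_const.mul hlam)

/-- `∂ⱼ(ΔΦ)` in terms of `H` and `∂ⱼH`. -/
theorem pd_lapPhi (hΦ : ContDiff ℝ (⊤ : ℕ∞) Φ) (hlam : ContDiff ℝ (⊤ : ℕ∞) lam)
    (hconf0 : ∀ x, ⟪pd 0 Φ x, pd 1 Φ x⟫ = 0)
    (hconf : ∀ x i, ‖pd i Φ x‖ = Real.exp (lam x)) (j : Fin 2) (x : Plane) :
    pd j (lap Φ) x = (4 * pd j lam x * rexp (2 * lam x)) • meanCurv m Φ lam x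
      + (2 * rexp (2 * lam x)) • pd j (meanCurv m Φ lam) x := by
  have hfun : lap Φ = fun y => (2 * rexp (2 * lam y)) • meanCurv m Φ lam y :=
    funext fun y => lapPhi_eq hΦ hlam hconf0 hconf y
  have hc : DifferentiableAt ℝ (fun y => 2 * rexp (2 * lam y)) x :=
    ((contDiff_const.mul (smQ hlam)).differentiable (by simp) x)
  rw [hfun, pd_smul hc ((smH hΦ hlam).differentiable (by simp) x) j]
  have hpdc : pd j (fun y => 2 * rexp (2 * lam y)) x = 2 * (2 * pd j lam x * rexp (2 * lam x)) := by
    rw [pd_mul (differentiableAt_const 2) ((smQ hlam).differentiable (by simp) x), pdq hlam]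
    simp [pd, fderiv_const]
  rw [hpdc]
  module

/-- `∂ⱼ(ΔΦ)` as sum of third derivatives. -/
theorem pd_lapPhi' (hΦ : ContDiff ℝ (⊤ : ℕ∞) Φ) (j : Fin 2) (x : Plane) :
    pd j (lap Φ) x = pd j (pd 0 (pd 0 Φ)) x + pd j (pd 1 (pd 1 Φ)) x := by
  have : lap Φ = fun y => pd 0 (pd 0 Φ) y + pd 1 (pd 1 Φ) y := rfl
  rw [this, pd_add ((contDiff_pd (contDiff_pd hΦ 0) 0).differentiable (by simp) x)
    ((contDiff_pd (contDiff_pd hΦ 1) 1).differentiable (by simp) x) j]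

end Geom5
section Geom6

variable {m : ℕ} {Φ : Plane → Em m} {lam : Plane → ℝ}

theorem pd_sub_smul2 {g u v : Plane → Em m} {s t : Plane → ℝ}
    (hg : ContDiff ℝ (⊤ : ℕ∞) g) (hs : ContDiff ℝ (⊤ : ℕ∞) s) (ht : ContDiff ℝ (⊤ : ℕ∞) t)
    (hu : ContDiff ℝ (⊤ : ℕ∞) u) (hv : ContDiff ℝ (⊤ : ℕ∞) v) (i : Fin 2) (x : Plane) :
    pd i (fun y => g y - s y • u y - t y • v y) x
      = pd i g x - pd i s x • u x - s x • pd i u x - pd i t x • v x - t x • pd i v x := by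
  rw [pd_sub (f := fun y => g y - s y • u y) (g := fun y => t y • v y) ((hg.sub (hs.smul hu)).differentiable (by simp) x)
      ((ht.smul hv).differentiable (by simp) x),
    pd_sub (f := g) (g := fun y => s y • u y) (hg.differentiable (by simp) x) ((hs.smul hu).differentiable (by simp) x),
    pd_smul (hs.differentiable (by simp) x) (hu.differentiable (by simp) x),
    pd_smul (ht.differentiable (by simp) x) (hv.differentiable (by simp) x)]
  abel

theorem pd_sub_smul1 {u v : Plane → Em m} {s t : Plane → ℝ}
    (hs : ContDiff ℝ (⊤ : ℕ∞) s) (ht : ContDiff ℝ (⊤ : ℕ∞) t)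
    (hu : ContDiff ℝ (⊤ : ℕ∞) u) (hv : ContDiff ℝ (⊤ : ℕ∞) v) (i : Fin 2) (x : Plane) :
    pd i (fun y => s y • u y - t y • v y) x
      = pd i s x • u x + s x • pd i u x - pd i t x • v x - t x • pd i v x := by
  rw [pd_sub (f := fun y => s y • u y) (g := fun y => t y • v y) ((hs.smul hu).differentiable (by simp) x) ((ht.smul hv).differentiable (by simp) x),
    pd_smul (hs.differentiable (by simp) x) (hu.differentiable (by simp) x),
    pd_smul (ht.differentiable (by simp) x) (hv.differentiable (by simp) x)]
  abel

end Geom6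
section Master

set_option maxHeartbeats 3000000 in
theorem master (m : ℕ) (Φ : Plane → Em m) (lam : Plane → ℝ) (Wn : Plane → Em m →L[ℝ] Em m)
    (hΦ : ContDiff ℝ (⊤ : ℕ∞) Φ) (hlam : ContDiff ℝ (⊤ : ℕ∞) lam)
    (hconf0 : ∀ x, ⟪pd 0 Φ x, pd 1 Φ x⟫ = 0)
    (hconf : ∀ x i, ‖pd i Φ x‖ = Real.exp (lam x))
    (hWn1 : ∀ x, Wn x (pd 0 Φ x) = -(pd 1 Φ x))
    (hWn2 : ∀ x, Wn x (pd 1 Φ x) = pd 0 Φ x)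
    (hWn3 : ∀ x v, piN m Φ lam x v = v → Wn x v = 0) (x : Plane) :
    lap (meanCurv m Φ lam) x
      - (3:ℝ) • divg (fun i y => piN m Φ lam y (pd i (meanCurv m Φ lam) y)) x
      + divg (fun i y => Wn y (perp i (meanCurv m Φ lam) y)) x
    = (-(2 * rexp (2 * lam x))) • (covLap m Φ lam x
        - (2 * ‖meanCurv m Φ lam x‖^2) • meanCurv m Φ lam x
        + ∑ i : Fin 2, ∑ j : Fin 2,
            ⟪sff m Φ lam i j x, meanCurv m Φ lam x⟫ • sff m Φ lam i j x) := by
  have hH := smH (m := m) hΦ hlam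
  have hsym : pd 1 (pd 0 Φ) = pd 0 (pd 1 Φ) := funext (pd_symm hΦ 1 0)
  have hsym3b : pd 1 (pd 0 (pd 1 Φ)) = pd 0 (pd 1 (pd 1 Φ)) :=
    funext (pd_symm (contDiff_pd hΦ 1) 1 0)
  have hsym3a : pd 1 (pd 0 (pd 0 Φ)) = pd 0 (pd 0 (pd 1 Φ)) := by
    have h1 : pd 1 (pd 0 (pd 0 Φ)) = pd 0 (pd 1 (pd 0 Φ)) :=
      funext (pd_symm (contDiff_pd hΦ 0) 1 0)
    rw [h1, hsym]
  -- function-level decomposition of ∂ₖH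
  have hPdH0 : pd 0 (meanCurv m Φ lam) = fun y =>
      (fun z => piN m Φ lam z (pd 0 (meanCurv m Φ lam) z)) y
      - (rexp (-(2 * lam y)) * ⟪meanCurv m Φ lam y, pd 0 (pd 0 Φ) y⟫) • pd 0 Φ y
      - (rexp (-(2 * lam y)) * ⟪meanCurv m Φ lam y, pd 0 (pd 1 Φ) y⟫) • pd 1 Φ y :=
    funext fun y => pdH_point hΦ hlam hconf0 hconf 0 y
  have hPdH1 : pd 1 (meanCurv m Φ lam) = fun y =>
      (fun z => piN m Φ lam z (pd 1 (meanCurv m Φ lam) z)) y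
      - (rexp (-(2 * lam y)) * ⟪meanCurv m Φ lam y, pd 0 (pd 1 Φ) y⟫) • pd 0 Φ y
      - (rexp (-(2 * lam y)) * ⟪meanCurv m Φ lam y, pd 1 (pd 1 Φ) y⟫) • pd 1 Φ y := by
    funext y
    have h := pdH_point hΦ hlam hconf0 hconf 1 y
    rw [hsym] at h
    exact h
  -- expansion of the two pieces of lap H
  have hlap00 : pd 0 (pd 0 (meanCurv m Φ lam)) x
      = pd 0 (fun z => piN m Φ lam z (pd 0 (meanCurv m Φ lam) z)) x
        - pd 0 (fun y => rexp (-(2 * lam y)) * ⟪meanCurv m Φ lam y, pd 0 (pd 0 Φ) y⟫) x • pd 0 Φ x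
        - (rexp (-(2 * lam x)) * ⟪meanCurv m Φ lam x, pd 0 (pd 0 Φ) x⟫) • pd 0 (pd 0 Φ) x
        - pd 0 (fun y => rexp (-(2 * lam y)) * ⟪meanCurv m Φ lam y, pd 0 (pd 1 Φ) y⟫) x • pd 1 Φ x
        - (rexp (-(2 * lam x)) * ⟪meanCurv m Φ lam x, pd 0 (pd 1 Φ) x⟫) • pd 0 (pd 1 Φ) x := by
    conv_lhs => rw [hPdH0]
    exact pd_sub_smul2 (smG hΦ hlam 0) (smS hΦ hlam 0 0) (smS hΦ hlam 0 1)
      (contDiff_pd hΦ 0) (contDiff_pd hΦ 1) 0 x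
  have hlap11 : pd 1 (pd 1 (meanCurv m Φ lam)) x
      = pd 1 (fun z => piN m Φ lam z (pd 1 (meanCurv m Φ lam) z)) x
        - pd 1 (fun y => rexp (-(2 * lam y)) * ⟪meanCurv m Φ lam y, pd 0 (pd 1 Φ) y⟫) x • pd 0 Φ x
        - (rexp (-(2 * lam x)) * ⟪meanCurv m Φ lam x, pd 0 (pd 1 Φ) x⟫) • pd 1 (pd 0 Φ) x
        - pd 1 (fun y => rexp (-(2 * lam y)) * ⟪meanCurv m Φ lam y, pd 1 (pd 1 Φ) y⟫) x • pd 1 Φ x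
        - (rexp (-(2 * lam x)) * ⟪meanCurv m Φ lam x, pd 1 (pd 1 Φ) x⟫) • pd 1 (pd 1 Φ) x := by
    conv_lhs => rw [hPdH1]
    exact pd_sub_smul2 (smG hΦ hlam 1) (smS hΦ hlam 0 1) (smS hΦ hlam 1 1)
      (contDiff_pd hΦ 0) (contDiff_pd hΦ 1) 1 x
  -- the wedge terms
  have hW0 : (fun y => Wn y (perp 0 (meanCurv m Φ lam) y)) = fun y =>
      (rexp (-(2 * lam y)) * ⟪meanCurv m Φ lam y, pd 1 (pd 1 Φ) y⟫) • pd 0 Φ y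
      - (rexp (-(2 * lam y)) * ⟪meanCurv m Φ lam y, pd 0 (pd 1 Φ) y⟫) • pd 1 Φ y := by
    funext y
    have hp : perp 0 (meanCurv m Φ lam) y = -(pd 1 (meanCurv m Φ lam) y) := by simp [perp]
    rw [hp, map_neg, Wn_formula hconf0 hconf hWn1 hWn2 hWn3 y,
      pdH_E hΦ hlam hconf0 hconf 1 1 y, pdH_E hΦ hlam hconf0 hconf 1 0 y, hsym]
    module
  have hW1 : (fun y => Wn y (perp 1 (meanCurv m Φ lam) y)) = fun y =>
      (rexp (-(2 * lam y)) * ⟪meanCurv m Φ lam y, pd 0 (pd 0 Φ) y⟫) • pd 1 Φ y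
      - (rexp (-(2 * lam y)) * ⟪meanCurv m Φ lam y, pd 0 (pd 1 Φ) y⟫) • pd 0 Φ y := by
    funext y
    have hp : perp 1 (meanCurv m Φ lam) y = pd 0 (meanCurv m Φ lam) y := by
      simp [perp]
    rw [hp, Wn_formula hconf0 hconf hWn1 hWn2 hWn3 y,
      pdH_E hΦ hlam hconf0 hconf 0 1 y, pdH_E hΦ hlam hconf0 hconf 0 0 y]
    module
  have hw0x : pd 0 (fun y => Wn y (perp 0 (meanCurv m Φ lam) y)) x
      = pd 0 (fun y => rexp (-(2 * lam y)) * ⟪meanCurv m Φ lam y, pd 1 (pd 1 Φ) y⟫) x • pd 0 Φ x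
        + (rexp (-(2 * lam x)) * ⟪meanCurv m Φ lam x, pd 1 (pd 1 Φ) x⟫) • pd 0 (pd 0 Φ) x
        - pd 0 (fun y => rexp (-(2 * lam y)) * ⟪meanCurv m Φ lam y, pd 0 (pd 1 Φ) y⟫) x • pd 1 Φ x
        - (rexp (-(2 * lam x)) * ⟪meanCurv m Φ lam x, pd 0 (pd 1 Φ) x⟫) • pd 0 (pd 1 Φ) x := by
    conv_lhs => rw [hW0]
    exact pd_sub_smul1 (smS hΦ hlam 1 1) (smS hΦ hlam 0 1)
      (contDiff_pd hΦ 0) (contDiff_pd hΦ 1) 0 x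
  have hw1x : pd 1 (fun y => Wn y (perp 1 (meanCurv m Φ lam) y)) x
      = pd 1 (fun y => rexp (-(2 * lam y)) * ⟪meanCurv m Φ lam y, pd 0 (pd 0 Φ) y⟫) x • pd 1 Φ x
        + (rexp (-(2 * lam x)) * ⟪meanCurv m Φ lam x, pd 0 (pd 0 Φ) x⟫) • pd 1 (pd 1 Φ) x
        - pd 1 (fun y => rexp (-(2 * lam y)) * ⟪meanCurv m Φ lam y, pd 0 (pd 1 Φ) y⟫) x • pd 0 Φ x
        - (rexp (-(2 * lam x)) * ⟪meanCurv m Φ lam x, pd 0 (pd 1 Φ) x⟫) • pd 1 (pd 0 Φ) x := by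
    conv_lhs => rw [hW1]
    exact pd_sub_smul1 (smS hΦ hlam 0 0) (smS hΦ hlam 0 1)
      (contDiff_pd hΦ 1) (contDiff_pd hΦ 0) 1 x
  -- divergence of G and covLap
  have hGzero : ∀ (k j : Fin 2),
      ⟪pd k (fun y => piN m Φ lam y (pd k (meanCurv m Φ lam) y)) x, pd j Φ x⟫
        = -⟪piN m Φ lam x (pd k (meanCurv m Φ lam) x), pd k (pd j Φ) x⟫ := fun k j =>
    pd_inner_zero (smG hΦ hlam k) (contDiff_pd hΦ j)
      (fun y => inner_piN_E hconf0 hconf y (pd k (meanCurv m Φ lam) y) j) k x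
  have hdg : divg (fun i y => piN m Φ lam y (pd i (meanCurv m Φ lam) y)) x
      = pd 0 (fun y => piN m Φ lam y (pd 0 (meanCurv m Φ lam) y)) x
        + pd 1 (fun y => piN m Φ lam y (pd 1 (meanCurv m Φ lam) y)) x := rfl
  have hcov : covLap m Φ lam x
      = rexp (-(2 * lam x)) • (pd 0 (fun y => piN m Φ lam y (pd 0 (meanCurv m Φ lam) y)) x
          + pd 1 (fun y => piN m Φ lam y (pd 1 (meanCurv m Φ lam) y)) x)
        + (rexp (-(2 * lam x))^2 * (⟪piN m Φ lam x (pd 0 (meanCurv m Φ lam) x), pd 0 (pd 0 Φ) x⟫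
            + ⟪piN m Φ lam x (pd 1 (meanCurv m Φ lam) x), pd 0 (pd 1 Φ) x⟫)) • pd 0 Φ x
        + (rexp (-(2 * lam x))^2 * (⟪piN m Φ lam x (pd 0 (meanCurv m Φ lam) x), pd 0 (pd 1 Φ) x⟫
            + ⟪piN m Φ lam x (pd 1 (meanCurv m Φ lam) x), pd 1 (pd 1 Φ) x⟫)) • pd 1 Φ x := by
    have h0 : covLap m Φ lam x = rexp (-(2 * lam x)) • piN m Φ lam x
        (divg (fun i y => piN m Φ lam y (pd i (meanCurv m Φ lam) y)) x) := rfl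
    rw [h0, piN_apply, hdg, inner_add_left, inner_add_left,
      hGzero 0 0, hGzero 1 0, hGzero 0 1, hGzero 1 1, hsym]
    module
  -- pointwise decomposition of piN(∂ₖH)
  have hGpt0 : piN m Φ lam x (pd 0 (meanCurv m Φ lam) x)
      = pd 0 (meanCurv m Φ lam) x
        + (rexp (-(2 * lam x)) * ⟪meanCurv m Φ lam x, pd 0 (pd 0 Φ) x⟫) • pd 0 Φ x
        + (rexp (-(2 * lam x)) * ⟪meanCurv m Φ lam x, pd 0 (pd 1 Φ) x⟫) • pd 1 Φ x := by
    have h := pdH_point hΦ hlam hconf0 hconf 0 x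
    conv_rhs => rw [h]
    module
  have hGpt1 : piN m Φ lam x (pd 1 (meanCurv m Φ lam) x)
      = pd 1 (meanCurv m Φ lam) x
        + (rexp (-(2 * lam x)) * ⟪meanCurv m Φ lam x, pd 0 (pd 1 Φ) x⟫) • pd 0 Φ x
        + (rexp (-(2 * lam x)) * ⟪meanCurv m Φ lam x, pd 1 (pd 1 Φ) x⟫) • pd 1 Φ x := by
    have h := pdH_point hΦ hlam hconf0 hconf 1 x
    rw [hsym] at h
    conv_rhs => rw [h]
    module
  -- derivative of the conformal factor
  have hpdrho : ∀ i : Fin 2, pd i (fun y => rexp (-(2 * lam y))) x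
      = -(2 * pd i lam x) * rexp (-(2 * lam x)) := by
    intro i
    have hc : DifferentiableAt ℝ (fun y => -(2 * lam y)) x :=
      ((contDiff_const.mul hlam).neg.differentiable (by simp) x)
    rw [pd_exp hc]
    have h1 : pd i (fun y => -(2 * lam y)) x = -(pd i (fun y => 2 * lam y) x) := pd_neg i
    rw [h1, pd_mul (differentiableAt_const 2) (hlam.differentiable (by simp) x)]
    simp [pd, fderiv_const]
  -- derivative of the scalar coefficients
  have hpdS : ∀ (i a b : Fin 2),
      pd i (fun y => rexp (-(2 * lam y)) * ⟪meanCurv m Φ lam y, pd a (pd b Φ) y⟫) x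
      = -(2 * pd i lam x) * rexp (-(2 * lam x)) * ⟪meanCurv m Φ lam x, pd a (pd b Φ) x⟫
        + rexp (-(2 * lam x)) * (⟪pd i (meanCurv m Φ lam) x, pd a (pd b Φ) x⟫
          + ⟪meanCurv m Φ lam x, pd i (pd a (pd b Φ)) x⟫) := by
    intro i a b
    rw [pd_mul ((smRho hlam).differentiable (by simp) x)
      ((contDiff_inner' hH (contDiff_pd (contDiff_pd hΦ b) a)).differentiable (by simp) x),
      hpdrho i, pd_inner (hH.differentiable (by simp) x)
        ((contDiff_pd (contDiff_pd hΦ b) a).differentiable (by simp) x) i]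
    try ring
  -- second fundamental form scalars
  have hsffH : ∀ a b : Fin 2, ⟪sff m Φ lam a b x, meanCurv m Φ lam x⟫
      = rexp (-(2 * lam x)) * ⟪meanCurv m Φ lam x, pd a (pd b Φ) x⟫ := by
    intro a b
    have h : sff m Φ lam a b x = rexp (-(2 * lam x)) • piN m Φ lam x (pd a (pd b Φ) x) := rfl
    rw [h, real_inner_smul_left, innerPiNH hconf0 hconf, real_inner_comm]
  have hsffeq : ∀ a b : Fin 2, sff m Φ lam a b x
      = rexp (-(2 * lam x)) • piN m Φ lam x (pd a (pd b Φ) x) := fun _ _ => rfl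
  -- eliminations coming from ΔΦ = 2 e^{2λ} H
  have hsumV : pd 0 (pd 0 Φ) x + pd 1 (pd 1 Φ) x
      = (2 * rexp (2 * lam x)) • meanCurv m Φ lam x := lapPhi_eq hΦ hlam hconf0 hconf x
  have hv : pd 1 (pd 1 Φ) x
      = (2 * rexp (2 * lam x)) • meanCurv m Φ lam x - pd 0 (pd 0 Φ) x :=
    eq_sub_of_add_eq' hsumV
  have ha : ⟪meanCurv m Φ lam x, pd 1 (pd 1 Φ) x⟫
      = 2 * rexp (2 * lam x) * ⟪meanCurv m Φ lam x, meanCurv m Φ lam x⟫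
        - ⟪meanCurv m Φ lam x, pd 0 (pd 0 Φ) x⟫ := by
    rw [hv, inner_sub_right, real_inner_smul_right]
  have hb : ∀ k : Fin 2, ⟪pd k (meanCurv m Φ lam) x, pd 1 (pd 1 Φ) x⟫
      = 2 * rexp (2 * lam x) * ⟪pd k (meanCurv m Φ lam) x, meanCurv m Φ lam x⟫
        - ⟪pd k (meanCurv m Φ lam) x, pd 0 (pd 0 Φ) x⟫ := by
    intro k; rw [hv, inner_sub_right, real_inner_smul_right]
  have hlap3 : ∀ j : Fin 2, pd j (pd 1 (pd 1 Φ)) x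
      = (4 * pd j lam x * rexp (2 * lam x)) • meanCurv m Φ lam x
        + (2 * rexp (2 * lam x)) • pd j (meanCurv m Φ lam) x - pd j (pd 0 (pd 0 Φ)) x := by
    intro j
    have h2 := pd_lapPhi hΦ hlam hconf0 hconf j x
    rw [pd_lapPhi' hΦ j x] at h2
    exact eq_sub_of_add_eq' h2
  have hT : ∀ j : Fin 2, ⟪meanCurv m Φ lam x, pd j (pd 1 (pd 1 Φ)) x⟫
      = 4 * pd j lam x * rexp (2 * lam x) * ⟪meanCurv m Φ lam x, meanCurv m Φ lam x⟫
        + 2 * rexp (2 * lam x) * ⟪pd j (meanCurv m Φ lam) x, meanCurv m Φ lam x⟫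
        - ⟪meanCurv m Φ lam x, pd j (pd 0 (pd 0 Φ)) x⟫ := by
    intro j
    rw [hlap3 j, inner_sub_right, inner_add_right, real_inner_smul_right,
      real_inner_smul_right,
      real_inner_comm (meanCurv m Φ lam x) (pd j (meanCurv m Φ lam) x)]
    try ring
  have hT0 := hT 0
  have hT1 := hT 1
  rw [hsym3a] at hT1
  -- expansions of ⟪piN(∂ₖH), ∂ᵢⱼΦ⟫
  have hGinA : ⟪piN m Φ lam x (pd 0 (meanCurv m Φ lam) x), pd 0 (pd 0 Φ) x⟫
      = ⟪pd 0 (meanCurv m Φ lam) x, pd 0 (pd 0 Φ) x⟫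
        + (rexp (-(2 * lam x)) * ⟪meanCurv m Φ lam x, pd 0 (pd 0 Φ) x⟫)
            * (pd 0 lam x * rexp (2 * lam x))
        + (rexp (-(2 * lam x)) * ⟪meanCurv m Φ lam x, pd 0 (pd 1 Φ) x⟫)
            * (-(pd 1 lam x) * rexp (2 * lam x)) := by
    rw [hGpt0, inner_add_left, inner_add_left, real_inner_smul_left, real_inner_smul_left,
      real_inner_comm (pd 0 (pd 0 Φ) x) (pd 0 Φ x), real_inner_comm (pd 0 (pd 0 Φ) x) (pd 1 Φ x),
      g000 hΦ hlam hconf0 hconf x, g001 hΦ hlam hconf0 hconf x]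
  have hGinB : ⟪piN m Φ lam x (pd 0 (meanCurv m Φ lam) x), pd 0 (pd 1 Φ) x⟫
      = ⟪pd 0 (meanCurv m Φ lam) x, pd 0 (pd 1 Φ) x⟫
        + (rexp (-(2 * lam x)) * ⟪meanCurv m Φ lam x, pd 0 (pd 0 Φ) x⟫)
            * (pd 1 lam x * rexp (2 * lam x))
        + (rexp (-(2 * lam x)) * ⟪meanCurv m Φ lam x, pd 0 (pd 1 Φ) x⟫)
            * (pd 0 lam x * rexp (2 * lam x)) := by
    rw [hGpt0, inner_add_left, inner_add_left, real_inner_smul_left, real_inner_smul_left,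
      real_inner_comm (pd 0 (pd 1 Φ) x) (pd 0 Φ x), real_inner_comm (pd 0 (pd 1 Φ) x) (pd 1 Φ x),
      g010 hΦ hlam hconf0 hconf x, g011 hΦ hlam hconf0 hconf x]
  have hGinC : ⟪piN m Φ lam x (pd 1 (meanCurv m Φ lam) x), pd 0 (pd 1 Φ) x⟫
      = ⟪pd 1 (meanCurv m Φ lam) x, pd 0 (pd 1 Φ) x⟫
        + (rexp (-(2 * lam x)) * ⟪meanCurv m Φ lam x, pd 0 (pd 1 Φ) x⟫)
            * (pd 1 lam x * rexp (2 * lam x))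
        + (rexp (-(2 * lam x)) * ⟪meanCurv m Φ lam x, pd 1 (pd 1 Φ) x⟫)
            * (pd 0 lam x * rexp (2 * lam x)) := by
    rw [hGpt1, inner_add_left, inner_add_left, real_inner_smul_left, real_inner_smul_left,
      real_inner_comm (pd 0 (pd 1 Φ) x) (pd 0 Φ x), real_inner_comm (pd 0 (pd 1 Φ) x) (pd 1 Φ x),
      g010 hΦ hlam hconf0 hconf x, g011 hΦ hlam hconf0 hconf x]
  have hGinD : ⟪piN m Φ lam x (pd 1 (meanCurv m Φ lam) x), pd 1 (pd 1 Φ) x⟫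
      = ⟪pd 1 (meanCurv m Φ lam) x, pd 1 (pd 1 Φ) x⟫
        + (rexp (-(2 * lam x)) * ⟪meanCurv m Φ lam x, pd 0 (pd 1 Φ) x⟫)
            * (-(pd 0 lam x) * rexp (2 * lam x))
        + (rexp (-(2 * lam x)) * ⟪meanCurv m Φ lam x, pd 1 (pd 1 Φ) x⟫)
            * (pd 1 lam x * rexp (2 * lam x)) := by
    rw [hGpt1, inner_add_left, inner_add_left, real_inner_smul_left, real_inner_smul_left,
      real_inner_comm (pd 1 (pd 1 Φ) x) (pd 0 Φ x), real_inner_comm (pd 1 (pd 1 Φ) x) (pd 1 Φ x),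
      g110 hΦ hlam hconf0 hconf x, g111 hΦ hlam hconf0 hconf x]
  -- final assembly
  simp only [lap, divg]
  rw [hlap00, hlap11, hw0x, hw1x, hcov, ← real_inner_self_eq_norm_sq]
  simp only [Fin.sum_univ_two]
  simp only [hsffH]
  simp only [hsffeq]
  rw [hsym]
  rw [hGinA, hGinB, hGinC, hGinD]
  simp only [piN_apply]
  simp only [g000 hΦ hlam hconf0 hconf, g010 hΦ hlam hconf0 hconf,
    g011 hΦ hlam hconf0 hconf, g111 hΦ hlam hconf0 hconf,
    g001 hΦ hlam hconf0 hconf, g110 hΦ hlam hconf0 hconf]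
  simp only [hpdS]
  rw [hsym3a, hsym3b]
  simp only [hT0, hT1, hb, ha]
  rw [hv]
  simp only [Real.exp_neg]
  have hq : rexp (2 * lam x) ≠ 0 := Real.exp_ne_zero _
  match_scalars <;> (field_simp; ring)

end Master
/-- a smooth conformal immersion is Willmore
(`Δ_⊥H⃗ − 2|H⃗|²H⃗ + Ã(H⃗) = 0`) iff
`ΔH⃗ − 3 div(π_{n⃗}(∇H⃗)) + div(∇⊥H⃗ ∧ n⃗) = 0` on `D²` (flat operators); here `Wn x`
is the linear map `v ↦ v ∧ n⃗(x)` under the identification of `(m−1)`-vectors with vectors. -/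
theorem willmore_iff_divergence_form
    (m : ℕ) (Φ : Plane → Em m) (lam : Plane → ℝ) (Wn : Plane → Em m →L[ℝ] Em m)
    (hΦ : ContDiff ℝ (⊤ : ℕ∞) Φ) (hlam : ContDiff ℝ (⊤ : ℕ∞) lam)
    (hconf0 : ∀ x, ⟪pd 0 Φ x, pd 1 Φ x⟫ = 0)
    (hconf : ∀ x i, ‖pd i Φ x‖ = Real.exp (lam x))
    (hWn1 : ∀ x, Wn x (pd 0 Φ x) = -(pd 1 Φ x))
    (hWn2 : ∀ x, Wn x (pd 1 Φ x) = pd 0 Φ x)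
    (hWn3 : ∀ x v, piN m Φ lam x v = v → Wn x v = 0) :
    (∀ x, covLap m Φ lam x - (2 * ‖meanCurv m Φ lam x‖^2) • meanCurv m Φ lam x
        + ∑ i : Fin 2, ∑ j : Fin 2,
            ⟪sff m Φ lam i j x, meanCurv m Φ lam x⟫ • sff m Φ lam i j x = 0)
    ↔ (∀ x, lap (meanCurv m Φ lam) x
        - (3:ℝ) • divg (fun i y => piN m Φ lam y (pd i (meanCurv m Φ lam) y)) x
        + divg (fun i y => Wn y (perp i (meanCurv m Φ lam) y)) x = 0) := by
  have key := master m Φ lam Wn hΦ hlam hconf0 hconf hWn1 hWn2 hWn3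
  constructor
  · intro h x
    rw [key x, h x, smul_zero]
  · intro h x
    have hm := key x
    rw [h x] at hm
    rcases smul_eq_zero.mp hm.symm with h1 | h2
    · simp [Real.exp_ne_zero] at h1
    · exact h2
end
end
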